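/- arXiv:1503.08900 — 2 statements merged into one kernel-verified Lean document; each statement's English description precedes it below -/
import Mathlib

section
/- If a correspondence \Psi from a topological space S into \mathbb{R}^l is compact valued and upper hemicontinuous, then the correspondence s \mapsto co(\Psi(s)) (the convex hull of \Psi(s)) is compact valued and upper hemicontinuous. -/
/-! By Carathéodory, every point of `co K` is a convex combination of at most `l + 1` points of
`K`, so `co K` is a finite union of continuous images of the compact sets `Δₖ × Kᵏ`. A compact
convex set has arbitrarily small convex open neighbourhoods (its thickenings); once `Ψ s'` lies in
such a neighbourhood of `co (Ψ s)`, so does `co (Ψ s')`. -/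

open Set Module

/-- `F` is upper hemicontinuous if the upper inverse of every open set is open. -/
def UpperHemicontinuousCorr {S X : Type*} [TopologicalSpace S] [TopologicalSpace X]
    (F : S → Set X) : Prop :=
  ∀ O : Set X, IsOpen O → IsOpen {s : S | F s ⊆ O}

section ConvexCombination

variable {E : Type*} [AddCommGroup E] [Module ℝ E]

def convexCombination (k : ℕ) (p : (Fin k → ℝ) × (Fin k → E)) : E :=
  ∑ i, p.1 i • p.2 i

theorem convexCombination_mem_convexHull {k : ℕ} {s : Set E} {p : (Fin k → ℝ) × (Fin k → E)}
    (hp : p ∈ stdSimplex ℝ (Fin k) ×ˢ univ.pi fun _ => s) :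
    convexCombination k p ∈ convexHull ℝ s :=
  (convex_convexHull ℝ s).sum_mem (fun i _ => hp.1.1 i) hp.1.2
    (fun i _ => subset_convexHull ℝ s (hp.2 i (mem_univ i)))

theorem exists_fin_convexCombination_of_mem_convexHull [FiniteDimensional ℝ E] {s : Set E}
    {x : E} (hx : x ∈ convexHull ℝ s) :
    ∃ k ≤ finrank ℝ E + 1, ∃ p ∈ stdSimplex ℝ (Fin k) ×ˢ univ.pi (fun _ => s),
      convexCombination k p = x := by
  obtain ⟨ι, _, z, w, hzs, hz, hw_pos, hw_sum, rfl⟩ := eq_pos_convex_span_of_mem_convexHull hx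
  let e := (Fintype.equivFin ι).symm
  have hcard : Fintype.card ι ≤ finrank ℝ E + 1 :=
    hz.card_le_finrank_succ.trans (Nat.add_le_add_right (Submodule.finrank_le _) 1)
  refine ⟨Fintype.card ι, hcard, (w ∘ e, z ∘ e), ⟨⟨fun i => (hw_pos _).le, ?_⟩, ?_⟩, ?_⟩
  · simpa using (e.sum_comp w).trans hw_sum
  · exact fun i _ => hzs (mem_range_self _)
  · exact e.sum_comp fun i => w i • z i

theorem convexHull_eq_biUnion_image_convexCombination [FiniteDimensional ℝ E] (s : Set E) :
    convexHull ℝ s = ⋃ k ∈ Finset.range (finrank ℝ E + 2),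
      convexCombination k '' (stdSimplex ℝ (Fin k) ×ˢ univ.pi fun _ => s) := by
  refine Subset.antisymm (fun x hx => ?_) ?_
  · obtain ⟨k, hk, p, hp, rfl⟩ := exists_fin_convexCombination_of_mem_convexHull hx
    exact mem_biUnion (Finset.mem_range.2 (Nat.lt_succ_of_le hk)) (mem_image_of_mem _ hp)
  · simp only [iUnion_subset_iff, image_subset_iff]
    exact fun k _ p hp => convexCombination_mem_convexHull hp

variable [TopologicalSpace E] [IsTopologicalAddGroup E] [ContinuousSMul ℝ E]

theorem continuous_convexCombination (k : ℕ) : Continuous (convexCombination (E := E) k) := by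
  unfold convexCombination
  fun_prop

theorem IsCompact.convexHull [FiniteDimensional ℝ E] {s : Set E} (hs : IsCompact s) :
    IsCompact (convexHull ℝ s) := by
  rw [convexHull_eq_biUnion_image_convexCombination]
  exact (Finset.range _).isCompact_biUnion fun k _ =>
    ((isCompact_stdSimplex ℝ _).prod (isCompact_univ_pi fun _ => hs)).image
      (continuous_convexCombination k)

end ConvexCombination

theorem UpperHemicontinuousCorr.convexHull_of_isCompact {S E : Type*} [TopologicalSpace S]
    [SeminormedAddCommGroup E] [NormedSpace ℝ E] {F : S → Set E} (hF : UpperHemicontinuousCorr F)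
    (hc : ∀ s, IsCompact (convexHull ℝ (F s))) :
    UpperHemicontinuousCorr fun s => convexHull ℝ (F s) := by
  refine fun O hO => isOpen_iff_mem_nhds.2 fun s hs => ?_
  obtain ⟨δ, hδ, hδO⟩ := (hc s).exists_thickening_subset_open hO hs
  have hF_thick : F s ⊆ Metric.thickening δ (convexHull ℝ (F s)) :=
    (subset_convexHull ℝ (F s)).trans (Metric.self_subset_thickening hδ _)
  filter_upwards [(hF _ Metric.isOpen_thickening).mem_nhds hF_thick] with t ht
  exact (convexHull_min ht ((convex_convexHull ℝ (F s)).thickening δ)).trans hδO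

/-- If a correspondence into `ℝ^l` is compact valued and upper hemicontinuous, then
its pointwise convex hull is compact valued and upper hemicontinuous. -/
theorem convexHull_upperHemicontinuous {S : Type*} [TopologicalSpace S] (l : ℕ)
    (Ψ : S → Set (EuclideanSpace ℝ (Fin l)))
    (hc : ∀ s, IsCompact (Ψ s)) (h : UpperHemicontinuousCorr Ψ) :
    (∀ s, IsCompact (convexHull ℝ (Ψ s))) ∧
      UpperHemicontinuousCorr (fun s => convexHull ℝ (Ψ s)) := by
  have hc_hull : ∀ s, IsCompact (convexHull ℝ (Ψ s)) := fun s => (hc s).convexHull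
  exact ⟨hc_hull, h.convexHull_of_isCompact hc_hull⟩
end

section
/- Let S and X be Polish spaces, \lambda a Borel probability measure on S, and (S_k)_{k \geq 1} a sequence of disjoint compact subsets of S with \lambda(\bigcup_k S_k) = 1. For each k define \lambda_k(D) = \lambda(D)/\lambda(S_k) for measurable D \subseteq S_k. Let (\nu_m)_{m \geq 0} be transition probabilities from S to \mathcal{M}(X) and \tau_m = \lambda \diamond \nu_m. Then \tau_m converges weakly to \tau_0 if and only if \lambda_k \diamond \nu_m converges weakly to \lambda_k \diamond \nu_0 for every k \geq 1. -/
/-!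
The first marginal of every `μ ⊗ₘ η` is `μ`, so the integral over the slab `s ×ˢ univ` of a
function bounded by `C` is at most `C * μ s`, uniformly in the kernel `η`; and `λ_k ⋄ ν` is the
rescaled restriction `λ(S_k)⁻¹ • (λ ⊗ₘ ν)|_{S_k × X}`.

Forward direction: choose a bounded continuous `g` close to the indicator of `S_k` in `L¹(λ)`
(`λ` is weakly regular on the Polish space `S`). Then `(s, x) ↦ g s * f (s, x)` is a test
function, and replacing it by `1_{S_k}(s) * f (s, x)` costs at most `‖f‖ * ‖1_{S_k} - g‖₁`
for every `m` at once.

Backward direction: `∫ f dτ_m = ∑ₖ ∫_{S_k × X} f dτ_m`, whose terms are dominated by the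
summable `‖f‖ * λ(S_k)`; Tannery's theorem passes the termwise convergence to the sum.
-/

open MeasureTheory ProbabilityTheory Filter Topology
open scoped ENNReal BoundedContinuousFunction

lemma tendsto_of_forall_approx {ι α : Type*} [PseudoMetricSpace α] {l : Filter ι} {a : ι → α}
    {a₀ : α} (h : ∀ ε > 0, ∃ (b : ι → α) (b₀ : α), Tendsto b l (𝓝 b₀) ∧
      (∀ i, dist (a i) (b i) ≤ ε) ∧ dist a₀ b₀ ≤ ε) :
    Tendsto a l (𝓝 a₀) := by
  refine Metric.tendsto_nhds.2 fun ε hε => ?_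
  obtain ⟨b, b₀, hb, hab, hab₀⟩ := h (ε / 3) (by positivity)
  filter_upwards [Metric.tendsto_nhds.1 hb (ε / 3) (by positivity)] with i hi
  calc dist (a i) a₀ ≤ dist (a i) (b i) + dist (b i) b₀ + dist b₀ a₀ := dist_triangle4 _ _ _ _
    _ < ε := by linarith [hab i, dist_comm a₀ b₀]

namespace MeasureTheory.Measure

variable {S X : Type*} [MeasurableSpace S] [MeasurableSpace X]

lemma compProd_restrict_left (μ : Measure S) [SFinite μ] (κ : Kernel S X) [IsSFiniteKernel κ]
    {s : Set S} (hs : MeasurableSet s) :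
    μ.restrict s ⊗ₘ κ = (μ ⊗ₘ κ).restrict (s ×ˢ Set.univ) := by
  ext t ht
  rw [compProd_apply ht, restrict_apply ht, compProd_apply (ht.inter (hs.prod .univ)),
    ← lintegral_indicator hs]
  refine lintegral_congr fun a => ?_
  by_cases ha : a ∈ s <;> simp [ha, Set.preimage_inter]

lemma setIntegral_prod_univ_eq_integral_indicator_mul (ρ : Measure (S × X)) {s : Set S}
    (hs : MeasurableSet s) (f : S × X → ℝ) :
    ∫ p in s ×ˢ Set.univ, f p ∂ρ = ∫ p, s.indicator 1 p.1 * f p ∂ρ := by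
  rw [← integral_indicator (hs.prod .univ)]
  congr with p
  by_cases hp : p.1 ∈ s <;> simp [Set.indicator, hp]

lemma integral_eq_tsum_setIntegral_prod_univ {ρ : Measure (S × X)} {s : ℕ → Set S}
    (hs : ∀ k, MeasurableSet (s k)) (hdisj : Pairwise (Function.onFun Disjoint s))
    (hcover : ∀ᵐ p ∂ρ, p.1 ∈ ⋃ k, s k) {f : S × X → ℝ} (hf : Integrable f ρ) :
    ∫ p, f p ∂ρ = ∑' k, ∫ p in s k ×ˢ Set.univ, f p ∂ρ := by
  have hdisj' : Pairwise (Function.onFun Disjoint fun k => s k ×ˢ (Set.univ : Set X)) := by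
    intro i j hij
    exact Set.disjoint_prod.2 (.inl (hdisj hij))
  rw [← integral_iUnion (fun k => (hs k).prod .univ) hdisj' hf.integrableOn,
    ← Set.iUnion_prod_const, restrict_eq_self_of_ae_mem (by simpa using hcover)]

section Marginal

variable (μ : Measure S) [SFinite μ] (κ : Kernel S X) [IsMarkovKernel κ]
  {E : Type*} [NormedAddCommGroup E]

lemma compProd_prod_univ {s : Set S} (hs : MeasurableSet s) :
    (μ ⊗ₘ κ) (s ×ˢ Set.univ) = μ s := by
  rw [Set.prod_univ, ← fst_apply hs, fst_compProd]

lemma integral_comp_fst_compProd [NormedSpace ℝ E] {φ : S → E} (hφ : AEStronglyMeasurable φ μ) :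
    ∫ p, φ p.1 ∂(μ ⊗ₘ κ) = ∫ s, φ s ∂μ := by
  rw [← fst_compProd μ κ] at hφ
  conv_rhs => rw [← fst_compProd μ κ]
  exact (integral_map measurable_fst.aemeasurable hφ).symm

lemma integrable_comp_fst_compProd {φ : S → E} (hφ : Integrable φ μ) :
    Integrable (fun p : S × X => φ p.1) (μ ⊗ₘ κ) := by
  rw [← fst_compProd μ κ] at hφ
  exact hφ.comp_measurable measurable_fst

lemma norm_integral_comp_fst_mul_le {φ : S → ℝ} (hφ : Integrable φ μ) {f : S × X → ℝ} {C : ℝ}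
    (hfC : ∀ p, ‖f p‖ ≤ C) :
    ‖∫ p, φ p.1 * f p ∂(μ ⊗ₘ κ)‖ ≤ C * ∫ s, ‖φ s‖ ∂μ := by
  calc ‖∫ p, φ p.1 * f p ∂(μ ⊗ₘ κ)‖ ≤ ∫ p, ‖φ p.1‖ * C ∂(μ ⊗ₘ κ) :=
        norm_integral_le_of_norm_le ((integrable_comp_fst_compProd μ κ hφ.norm).mul_const C)
          (.of_forall fun p => by rw [norm_mul]; gcongr; exact hfC p)
    _ = C * ∫ s, ‖φ s‖ ∂μ := by
        rw [integral_mul_const, mul_comm, integral_comp_fst_compProd μ κ hφ.norm.1]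

end Marginal

section FiniteMarginal

variable (μ : Measure S) [IsFiniteMeasure μ] (κ : Kernel S X) [IsMarkovKernel κ]

lemma norm_setIntegral_prod_univ_le {s : Set S} (hs : MeasurableSet s)
    {f : S × X → ℝ} {C : ℝ} (hfC : ∀ p, ‖f p‖ ≤ C) :
    ‖∫ p in s ×ˢ Set.univ, f p ∂(μ ⊗ₘ κ)‖ ≤ C * μ.real s := by
  have := norm_setIntegral_le_of_norm_le_const (μ := μ ⊗ₘ κ) (s := s ×ˢ Set.univ)
    (measure_lt_top _ _) fun p _ => hfC p
  rwa [measureReal_def, compProd_prod_univ μ κ hs, ← measureReal_def] at this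

lemma norm_setIntegral_prod_univ_sub_integral_le {s : Set S} (hs : MeasurableSet s)
    {f : S × X → ℝ} (hf : AEStronglyMeasurable f (μ ⊗ₘ κ)) {C : ℝ} (hfC : ∀ p, ‖f p‖ ≤ C)
    {g : S → ℝ} (hg : Integrable g μ) :
    ‖∫ p in s ×ˢ Set.univ, f p ∂(μ ⊗ₘ κ) - ∫ p, g p.1 * f p ∂(μ ⊗ₘ κ)‖
      ≤ C * ∫ x, ‖s.indicator 1 x - g x‖ ∂μ := by
  have hind : Integrable (s.indicator 1) μ := (integrable_const (1 : ℝ)).indicator hs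
  have hbdd (φ : S → ℝ) (hφ : Integrable φ μ) : Integrable (fun p => φ p.1 * f p) (μ ⊗ₘ κ) :=
    (integrable_comp_fst_compProd μ κ hφ).mul_bdd hf (.of_forall hfC)
  rw [setIntegral_prod_univ_eq_integral_indicator_mul _ hs,
    ← integral_sub (hbdd _ hind) (hbdd _ hg)]
  simp_rw [← sub_mul]
  exact norm_integral_comp_fst_mul_le μ κ (hind.sub hg) hfC

end FiniteMarginal

end MeasureTheory.Measure

namespace ProbabilityTheory

variable {S X : Type*} [MeasurableSpace S] [MeasurableSpace X]

lemma measure_smul_cond (μ : Measure S) {s : Set S} (hs : μ s ≠ ∞) :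
    μ s • μ[|s] = μ.restrict s := by
  rcases eq_or_ne (μ s) 0 with h0 | h0
  · simp [h0, Measure.restrict_eq_zero.2 h0]
  · rw [cond, smul_smul, ENNReal.mul_inv_cancel h0 hs, one_smul]

lemma integral_cond_compProd (μ : Measure S) [SFinite μ] (κ : Kernel S X) [IsSFiniteKernel κ]
    {s : Set S} (hs : MeasurableSet s) (f : S × X → ℝ) :
    ∫ p, f p ∂(μ[|s] ⊗ₘ κ) = (μ s).toReal⁻¹ * ∫ p in s ×ˢ Set.univ, f p ∂(μ ⊗ₘ κ) := by
  rw [cond, Measure.compProd_smul_left, Measure.compProd_restrict_left μ κ hs,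
    integral_smul_measure, ENNReal.toReal_inv, smul_eq_mul]

lemma setIntegral_prod_univ_compProd (μ : Measure S) [IsFiniteMeasure μ] (κ : Kernel S X)
    [IsSFiniteKernel κ] {s : Set S} (hs : MeasurableSet s) (f : S × X → ℝ) :
    ∫ p in s ×ˢ Set.univ, f p ∂(μ ⊗ₘ κ) = (μ s).toReal * ∫ p, f p ∂(μ[|s] ⊗ₘ κ) := by
  rw [← Measure.compProd_restrict_left μ κ hs, ← measure_smul_cond μ (measure_ne_top μ s),
    Measure.compProd_smul_left, integral_smul_measure, smul_eq_mul]

section Convergence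

variable {ι S X : Type*} {l : Filter ι} [MeasurableSpace S] [MeasurableSpace X]
  (μ : Measure S) [IsFiniteMeasure μ] (κ : ι → Kernel S X) [∀ i, IsMarkovKernel (κ i)]
  (κ₀ : Kernel S X) [IsMarkovKernel κ₀]

theorem tendsto_integral_compProd_of_tendsto_setIntegral {s : ℕ → Set S}
    (hs : ∀ k, MeasurableSet (s k)) (hdisj : Pairwise (Function.onFun Disjoint s))
    (hcover : ∀ᵐ x ∂μ, x ∈ ⋃ k, s k) {f : S × X → ℝ} (hf : StronglyMeasurable f) {C : ℝ}
    (hfC : ∀ p, ‖f p‖ ≤ C)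
    (h : ∀ k, Tendsto (fun i => ∫ p in s k ×ˢ Set.univ, f p ∂(μ ⊗ₘ κ i)) l
      (𝓝 (∫ p in s k ×ˢ Set.univ, f p ∂(μ ⊗ₘ κ₀)))) :
    Tendsto (fun i => ∫ p, f p ∂(μ ⊗ₘ κ i)) l (𝓝 (∫ p, f p ∂(μ ⊗ₘ κ₀))) := by
  have hsum (η : Kernel S X) [IsMarkovKernel η] :
      ∫ p, f p ∂(μ ⊗ₘ η) = ∑' k, ∫ p in s k ×ˢ Set.univ, f p ∂(μ ⊗ₘ η) :=
    Measure.integral_eq_tsum_setIntegral_prod_univ hs hdisj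
      (Measure.ae_compProd_of_ae_fst η (MeasurableSet.iUnion hs) hcover)
      (.of_bound (μ := μ ⊗ₘ η) hf.aestronglyMeasurable C (.of_forall hfC))
  simp only [hsum]
  exact tendsto_tsum_of_dominated_convergence ((summable_measure_toReal hs hdisj).mul_left C) h
    (.of_forall fun i k => Measure.norm_setIntegral_prod_univ_le μ (κ i) (hs k) hfC)

theorem tendsto_setIntegral_prod_univ_of_tendsto_integral [TopologicalSpace S] [NormalSpace S]
    [BorelSpace S] [μ.WeaklyRegular] [TopologicalSpace X] [OpensMeasurableSpace (S × X)]
    (h : ∀ f : S × X →ᵇ ℝ, Tendsto (fun i => ∫ p, f p ∂(μ ⊗ₘ κ i)) l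
      (𝓝 (∫ p, f p ∂(μ ⊗ₘ κ₀))))
    {s : Set S} (hs : MeasurableSet s) (f : S × X →ᵇ ℝ) :
    Tendsto (fun i => ∫ p in s ×ˢ Set.univ, f p ∂(μ ⊗ₘ κ i)) l
      (𝓝 (∫ p in s ×ˢ Set.univ, f p ∂(μ ⊗ₘ κ₀))) := by
  refine tendsto_of_forall_approx fun ε hε => ?_
  have hε' : 0 < ε / (‖f‖ + 1) := by positivity
  obtain ⟨g, hg, hgi⟩ :=
    ((integrable_const (μ := μ) (1 : ℝ)).indicator hs).exists_boundedContinuous_integral_sub_le hε'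
  have hclose (η : Kernel S X) [IsMarkovKernel η] :
      dist (∫ p in s ×ˢ Set.univ, f p ∂(μ ⊗ₘ η)) (∫ p, g p.1 * f p ∂(μ ⊗ₘ η)) ≤ ε := by
    rw [dist_eq_norm]
    refine (Measure.norm_setIntegral_prod_univ_sub_integral_le μ η hs
      f.continuous.aestronglyMeasurable f.norm_coe_le_norm hgi).trans ?_
    calc ‖f‖ * ∫ x, ‖s.indicator 1 x - g x‖ ∂μ ≤ (‖f‖ + 1) * (ε / (‖f‖ + 1)) := by
          gcongr
          · linarith
          · exact hg
      _ = ε := mul_div_cancel₀ _ (by positivity)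
  exact ⟨_, _, h (g.compContinuous ⟨Prod.fst, continuous_fst⟩ * f), fun i => hclose (κ i),
    hclose κ₀⟩

end Convergence

end ProbabilityTheory

theorem weak_convergence_piecewise_general {S X : Type*}
    [TopologicalSpace S] [PolishSpace S] [MeasurableSpace S] [BorelSpace S]
    [TopologicalSpace X] [MeasurableSpace X] [BorelSpace X]
    (lam : Measure S) [IsProbabilityMeasure lam]
    (Sk : ℕ → Set S) (hcomp : ∀ k, IsCompact (Sk k))
    (hdisj : Pairwise (Function.onFun Disjoint Sk))
    (hfull : lam (⋃ k, Sk k) = 1)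
    (ν : ℕ → Kernel S X) [∀ m, IsMarkovKernel (ν m)] :
    (∀ f : BoundedContinuousFunction (S × X) ℝ,
        Tendsto (fun m => ∫ p, f p ∂(lam ⊗ₘ ν m)) atTop
          (𝓝 (∫ p, f p ∂(lam ⊗ₘ ν 0)))) ↔
    (∀ k, ∀ f : BoundedContinuousFunction (S × X) ℝ,
        Tendsto
          (fun m => ∫ p, f p ∂(((lam (Sk k))⁻¹ • lam.restrict (Sk k)) ⊗ₘ ν m)) atTop
          (𝓝 (∫ p, f p ∂(((lam (Sk k))⁻¹ • lam.restrict (Sk k)) ⊗ₘ ν 0)))) := by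
  have hmeas (k : ℕ) : MeasurableSet (Sk k) := (hcomp k).measurableSet
  change _ ↔ ∀ k (f : S × X →ᵇ ℝ), Tendsto (fun m => ∫ p, f p ∂(lam[|Sk k] ⊗ₘ ν m)) atTop
    (𝓝 (∫ p, f p ∂(lam[|Sk k] ⊗ₘ ν 0)))
  constructor
  · intro h k f
    simp only [integral_cond_compProd lam _ (hmeas k)]
    exact (tendsto_setIntegral_prod_univ_of_tendsto_integral lam ν (ν 0) h (hmeas k) f).const_mul _
  · intro h f
    have hcover : ∀ᵐ x ∂lam, x ∈ ⋃ k, Sk k := by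
      rwa [ae_mem_iff_measure_eq (MeasurableSet.iUnion hmeas).nullMeasurableSet, measure_univ]
    refine tendsto_integral_compProd_of_tendsto_setIntegral lam ν (ν 0) hmeas hdisj hcover
      f.continuous.stronglyMeasurable f.norm_coe_le_norm fun k => ?_
    simp only [setIntegral_prod_univ_compProd lam _ (hmeas k)]
    exact (h k f).const_mul _

/-- Let `λ` be a Borel probability measure on a Polish space `S`, and `(S_k)` disjoint
compact subsets of positive measure with `λ(⋃ S_k) = 1`, with normalized restrictions
`λ_k = λ(S_k)⁻¹ • λ|_{S_k}`. Let `(ν_m)` be transition probabilities from `S` to a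
Polish space `X` and `τ_m = λ ⋄ ν_m`. Then `τ_m` converges weakly to `τ_0` iff
`λ_k ⋄ ν_m` converges weakly to `λ_k ⋄ ν_0` for every `k`. -/
theorem weak_convergence_piecewise {S X : Type*}
    [TopologicalSpace S] [PolishSpace S] [MeasurableSpace S] [BorelSpace S]
    [TopologicalSpace X] [PolishSpace X] [MeasurableSpace X] [BorelSpace X]
    (lam : Measure S) [IsProbabilityMeasure lam]
    (Sk : ℕ → Set S) (hcomp : ∀ k, IsCompact (Sk k))
    (hdisj : Pairwise (Function.onFun Disjoint Sk))
    (hfull : lam (⋃ k, Sk k) = 1) (hpos : ∀ k, 0 < lam (Sk k))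
    (ν : ℕ → Kernel S X) [∀ m, IsMarkovKernel (ν m)] :
    (∀ f : BoundedContinuousFunction (S × X) ℝ,
        Tendsto (fun m => ∫ p, f p ∂(lam ⊗ₘ ν m)) atTop
          (𝓝 (∫ p, f p ∂(lam ⊗ₘ ν 0)))) ↔
    (∀ k, ∀ f : BoundedContinuousFunction (S × X) ℝ,
        Tendsto
          (fun m => ∫ p, f p ∂(((lam (Sk k))⁻¹ • lam.restrict (Sk k)) ⊗ₘ ν m)) atTop
          (𝓝 (∫ p, f p ∂(((lam (Sk k))⁻¹ • lam.restrict (Sk k)) ⊗ₘ ν 0)))) :=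
  weak_convergence_piecewise_general lam Sk hcomp hdisj hfull ν
end
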